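/- Let E ∈ ℝ² be nonzero, R > 0, L > 0, ω ∈ ℝ, and Imax > 0. Define A = [[−R/L, ω], [−ω, −R/L]] and, for I ∈ ℝ² with ‖I‖ ≤ Imax, set P(I) = (3/2)R‖I‖² + (3/2)E·I and Q(I) = (3/2)ωL‖I‖² + (3/2)(JᵀE)·I where J = [[0,1],[−1,0]]. Then the set { (P(I), Q(I)) : ‖I‖ ≤ Imax } ⊆ ℝ² is convex. -/

import Mathlib

/-!
With `F = Jᵀ E`, the vectors `E` and `F` are orthogonal and nonzero, so some `w` has
`E ⬝ᵥ w = R` and `F ⬝ᵥ w = ω L`. Then `(P(I), Q(I)) = ℓ (‖I‖² w + I)` for the linear map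
`ℓ z = (3/2) (E ⬝ᵥ z, F ⬝ᵥ z)`, so it suffices that `{q x • w + x | q x ≤ ρ}` is convex, which
holds for every nonnegative convex `q`. A convex combination of two of its points has the form
`t • w + c` with `q c ≤ t` by convexity; by the intermediate value theorem some `s ∈ [0, t]` has
`q (c + s • w) = t - s`, and then `x = c + s • w` satisfies `q x • w + x = t • w + c`.
-/

open Set Matrix

section QuadraticPlusLinear

variable {V W : Type*} [AddCommGroup V] [Module ℝ V] [AddCommGroup W] [Module ℝ W]

theorem convex_image_smul_add_self {q : V → ℝ} (hq : ConvexOn ℝ univ q) (hq0 : ∀ x, 0 ≤ q x)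
    (w : V) (ρ : ℝ) : Convex ℝ ((fun x => q x • w + x) '' {x | q x ≤ ρ}) := by
  rintro _ ⟨x, hx, rfl⟩ _ ⟨y, hy, rfl⟩ a b ha hb hab
  set c := a • x + b • y
  set t := a * q x + b * q y
  have hct : q c ≤ t := hq.2 (mem_univ x) (mem_univ y) ha hb hab
  have htρ : t ≤ ρ := by
    calc t ≤ a * ρ + b * ρ :=
          add_le_add (mul_le_mul_of_nonneg_left hx ha) (mul_le_mul_of_nonneg_left hy hb)
      _ = ρ := by rw [← add_mul, hab, one_mul]
  have hg : Continuous fun s : ℝ => q (c + s • w) + s := by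
    have hline : ConvexOn ℝ univ fun s : ℝ => q (c + s • w) := by
      simpa [Function.comp_def, AffineMap.lineMap_apply, add_comm] using
        hq.comp_affineMap (AffineMap.lineMap c (c + w))
    exact (continuousOn_univ.1 (hline.continuousOn isOpen_univ)).add continuous_id
  obtain ⟨s, ⟨hs0, -⟩, hs⟩ : t ∈ (fun s : ℝ => q (c + s • w) + s) '' Icc 0 t :=
    intermediate_value_Icc (add_nonneg (mul_nonneg ha (hq0 x)) (mul_nonneg hb (hq0 y)))
      hg.continuousOn ⟨by simpa using hct, le_add_of_nonneg_left (hq0 _)⟩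
  have hqs : q (c + s • w) = t - s := eq_sub_of_add_eq hs
  refine ⟨c + s • w, ?_, ?_⟩
  · show q (c + s • w) ≤ ρ
    linarith
  · simp only [hqs, c, t]
    module

theorem convex_image_smul_add_linearMap {q : V → ℝ} (hq : ConvexOn ℝ univ q)
    (hq0 : ∀ x, 0 ≤ q x) (f : V →ₗ[ℝ] W) (w : V) (ρ : ℝ) :
    Convex ℝ ((fun x => q x • f w + f x) '' {x | q x ≤ ρ}) := by
  simpa only [image_image, map_add, map_smul] using
    (convex_image_smul_add_self hq hq0 w ρ).linear_image f

end QuadraticPlusLinear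

section DotProduct

variable {ι : Type*} [Fintype ι]

theorem convexOn_dotProduct_self : ConvexOn ℝ univ fun x : ι → ℝ => x ⬝ᵥ x := by
  refine ⟨convex_univ, fun x _ y _ a b ha hb hab => ?_⟩
  simp only [dotProduct, Pi.add_apply, Pi.smul_apply, smul_eq_mul, Finset.mul_sum,
    ← Finset.sum_add_distrib]
  gcongr with i
  simpa [sq] using (Even.convexOn_pow even_two).2 (mem_univ (x i)) (mem_univ (y i)) ha hb hab

theorem dotProduct_self_nonneg (x : ι → ℝ) : 0 ≤ x ⬝ᵥ x :=
  Finset.sum_nonneg fun i _ => mul_self_nonneg (x i)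

theorem exists_dotProduct_eq_of_orthogonal {e f : ι → ℝ} (he : e ≠ 0) (hf : f ≠ 0)
    (hef : e ⬝ᵥ f = 0) (r s : ℝ) : ∃ w, e ⬝ᵥ w = r ∧ f ⬝ᵥ w = s := by
  have he' : e ⬝ᵥ e ≠ 0 := dotProduct_self_eq_zero.not.2 he
  have hf' : f ⬝ᵥ f ≠ 0 := dotProduct_self_eq_zero.not.2 hf
  refine ⟨(r / (e ⬝ᵥ e)) • e + (s / (f ⬝ᵥ f)) • f, ?_, ?_⟩
  · simp [dotProduct_add, dotProduct_smul, hef, he']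
  · simp [dotProduct_add, dotProduct_smul, dotProduct_comm f e, hef, hf']

end DotProduct

theorem dotProduct_rot_mulVec {R : Type*} [CommRing R] (v : Fin 2 → R) :
    v ⬝ᵥ (!![0, 1; -1, 0]ᵀ *ᵥ v) = 0 := by
  simp [dotProduct, mulVec, Fin.sum_univ_two]; ring

theorem rot_mulVec_dotProduct_self {R : Type*} [CommRing R] (v : Fin 2 → R) :
    (!![0, 1; -1, 0]ᵀ *ᵥ v) ⬝ᵥ (!![0, 1; -1, 0]ᵀ *ᵥ v) = v ⬝ᵥ v := by
  simp [dotProduct, mulVec, Fin.sum_univ_two]; ring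

theorem stmt13_general (R L ω Imax : ℝ)
    (E : Fin 2 → ℝ) (hE : E ≠ 0)
    (J : Matrix (Fin 2) (Fin 2) ℝ) (hJ : J = !![0, 1; -1, 0]) :
    Convex ℝ {p : ℝ × ℝ | ∃ I : Fin 2 → ℝ, I ⬝ᵥ I ≤ Imax ^ 2 ∧
      p = ((3 / 2) * R * (I ⬝ᵥ I) + (3 / 2) * (E ⬝ᵥ I),
           (3 / 2) * (ω * L) * (I ⬝ᵥ I) + (3 / 2) * ((Jᵀ.mulVec E) ⬝ᵥ I))} := by
  subst hJ
  set F := !![(0 : ℝ), 1; -1, 0]ᵀ *ᵥ E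
  have hF : F ≠ 0 := by
    rwa [ne_eq, ← dotProduct_self_eq_zero, rot_mulVec_dotProduct_self, dotProduct_self_eq_zero]
  obtain ⟨w, hEw, hFw⟩ :=
    exists_dotProduct_eq_of_orthogonal hE hF (dotProduct_rot_mulVec E) R (ω * L)
  let f : (Fin 2 → ℝ) →ₗ[ℝ] ℝ × ℝ :=
    (3 / 2 : ℝ) • (dotProductBilin ℝ ℝ E).prod (dotProductBilin ℝ ℝ F)
  have hf (I : Fin 2 → ℝ) : (I ⬝ᵥ I) • f w + f I =
      ((3 / 2) * R * (I ⬝ᵥ I) + (3 / 2) * (E ⬝ᵥ I),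
        (3 / 2) * (ω * L) * (I ⬝ᵥ I) + (3 / 2) * (F ⬝ᵥ I)) := by
    ext <;> simp [f, hEw, hFw] <;> ring
  refine cast (congrArg (Convex ℝ) ?_) (convex_image_smul_add_linearMap convexOn_dotProduct_self
    dotProduct_self_nonneg f w (Imax ^ 2))
  ext p
  simp only [mem_image, mem_ofPred_eq, hf, eq_comm]

theorem stmt13 (R L ω Imax : ℝ) (hR : 0 < R) (hL : 0 < L) (hImax : 0 < Imax)
    (E : Fin 2 → ℝ) (hE : E ≠ 0)
    (J : Matrix (Fin 2) (Fin 2) ℝ) (hJ : J = !![0, 1; -1, 0]) :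
    Convex ℝ {p : ℝ × ℝ | ∃ I : Fin 2 → ℝ, I ⬝ᵥ I ≤ Imax ^ 2 ∧
      p = ((3 / 2) * R * (I ⬝ᵥ I) + (3 / 2) * (E ⬝ᵥ I),
           (3 / 2) * (ω * L) * (I ⬝ᵥ I) + (3 / 2) * ((Jᵀ.mulVec E) ⬝ᵥ I))} :=
  stmt13_general R L ω Imax E hE J hJ
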